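/- arXiv:1201.0966 — 8 statements merged into one kernel-verified Lean document; each statement's English description precedes it below -/
import Mathlib

section
/- Let R be a commutative semiring in which addition is selective (for all a, b in R, a + b = a or a + b = b). For n ≥ 1 and any n×n matrices A, B over R, there exists g ∈ R such that perm(A·B) = perm(A)·perm(B) + g, where perm(M) = ∑_{σ ∈ S_n} ∏_{i} M_{i,σ(i)} denotes the permanent. -/
private lemma sel_idem {R : Type*} [CommSemiring R]
    (hsel : ∀ a b : R, a + b = a ∨ a + b = b) (a : R) : a + a = a := by
  rcases hsel a a with h | h <;> exact h

private lemma sum_add_mem {R : Type*} [CommSemiring R]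
    (hsel : ∀ a b : R, a + b = a ∨ a + b = b) {ι : Type*} [DecidableEq ι] {s : Finset ι}
    (f : ι → R) {x : ι} (hx : x ∈ s) : (∑ y ∈ s, f y) + f x = ∑ y ∈ s, f y := by
  rw [← Finset.add_sum_erase s f hx, add_assoc, add_comm (∑ y ∈ s.erase x, f y),
    ← add_assoc, sel_idem hsel]

private lemma add_sum_subsumed {R : Type*} [CommSemiring R] {ι : Type*} [DecidableEq ι]
    {s : Finset ι} {S : R} (f : ι → R) (h : ∀ x ∈ s, S + f x = S) :
    S + ∑ x ∈ s, f x = S := by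
  induction s using Finset.induction_on with
  | empty => simp
  | @insert a t hx ih =>
    rw [Finset.sum_insert hx, ← add_assoc, h a (Finset.mem_insert_self a t)]
    exact ih fun x hx => h x (Finset.mem_insert_of_mem hx)

/-- Supertropical "rule of determinants" analog (Theorem 1.3): over a commutative
semiring with selective addition, `perm (A * B) = perm A * perm B + g` for some `g`. -/
theorem permanent_mul_eq_mul_permanent_add {R : Type*} [CommSemiring R]
    (hsel : ∀ a b : R, a + b = a ∨ a + b = b)
    {n : ℕ} (hn : 1 ≤ n) (A B : Matrix (Fin n) (Fin n) R) :
    ∃ g : R, (A * B).permanent = A.permanent * B.permanent + g := by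
  refine ⟨(A * B).permanent, ?_⟩
  have key : A.permanent * B.permanent + (A * B).permanent = (A * B).permanent := by
    rw [add_comm]
    unfold Matrix.permanent
    rw [Finset.sum_mul_sum]
    refine add_sum_subsumed _ (fun τ _ => add_sum_subsumed _ (fun σ' _ => ?_))
    -- the term is (∏ i, A (τ i) i) * (∏ i, B (σ' i) i); it appears in the expansion
    have expand : ∀ σ : Equiv.Perm (Fin n),
        (∏ i, (A * B) (σ i) i) =
        ∑ p ∈ Fintype.piFinset (fun _ : Fin n => (Finset.univ : Finset (Fin n))),
          ∏ i, A (σ i) (p i) * B (p i) i := by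
      intro σ
      simp only [Matrix.mul_apply]
      rw [Finset.prod_univ_sum]
    have hterm : (∏ i, A (τ i) i) * (∏ i, B (σ' i) i) =
        ∏ i, A ((σ'.trans τ) i) ((⇑σ' : Fin n → Fin n) i) * B ((⇑σ' : Fin n → Fin n) i) i := by
      rw [Finset.prod_mul_distrib]
      congr 1
      exact (Equiv.prod_comp σ' (fun j => A (τ j) j)).symm
    rw [hterm]
    have h1 : (∑ σ : Equiv.Perm (Fin n), ∏ i, (A * B) (σ i) i) +
        (∏ i, A ((σ'.trans τ) i) (σ' i) * B (σ' i) i) =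
        ∑ σ : Equiv.Perm (Fin n), ∏ i, (A * B) (σ i) i := by
      have hmem : (⇑σ' : Fin n → Fin n) ∈
          Fintype.piFinset (fun _ : Fin n => (Finset.univ : Finset (Fin n))) := by
        simp
      calc (∑ σ : Equiv.Perm (Fin n), ∏ i, (A * B) (σ i) i) +
            (∏ i, A ((σ'.trans τ) i) (σ' i) * B (σ' i) i)
          = (∑ σ ∈ (Finset.univ : Finset (Equiv.Perm (Fin n))).erase (σ'.trans τ),
              ∏ i, (A * B) (σ i) i) +
            ((∏ i, (A * B) ((σ'.trans τ) i) i) +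
              (∏ i, A ((σ'.trans τ) i) (σ' i) * B (σ' i) i)) := by
            rw [← Finset.add_sum_erase _ _ (Finset.mem_univ (σ'.trans τ))]; ring
        _ = (∑ σ ∈ (Finset.univ : Finset (Equiv.Perm (Fin n))).erase (σ'.trans τ),
              ∏ i, (A * B) (σ i) i) + (∏ i, (A * B) ((σ'.trans τ) i) i) := by
            congr 1
            rw [expand]
            exact sum_add_mem hsel _ hmem
        _ = ∑ σ : Equiv.Perm (Fin n), ∏ i, (A * B) (σ i) i := by
            rw [add_comm]
            exact Finset.add_sum_erase Finset.univ
              (fun σ : Equiv.Perm (Fin n) => ∏ i, (A * B) (σ i) i) (Finset.mem_univ _)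
    exact h1
  exact key.symm
end

section
/- For n ≥ 1 and n×n real matrices A, B, the tropical permanent satisfies perm(A⊙B) ≥ perm(A) + perm(B), where A⊙B is the tropical (max-plus) matrix product. -/
/-- The tropical (max-plus) product of two `n × n` real matrices:
`(A ⊙ B) i j = max_k (A i k + B k j)`. -/
noncomputable def tropMul {n : ℕ} [NeZero n] (A B : Fin n → Fin n → ℝ) :
    Fin n → Fin n → ℝ :=
  fun i j => Finset.univ.sup' Finset.univ_nonempty fun k => A i k + B k j

/-- The tropical permanent of an `n × n` real matrix:
`perm M = max_{σ ∈ S_n} ∑ i, M i (σ i)`. -/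
noncomputable def tropPerm {n : ℕ} (M : Fin n → Fin n → ℝ) : ℝ :=
  Finset.univ.sup' ⟨Equiv.refl (Fin n), Finset.mem_univ _⟩
    fun σ : Equiv.Perm (Fin n) => ∑ i, M i (σ i)

/-- The max-plus rule of determinants (Theorem 1.3):
`perm (A ⊙ B) ≥ perm A + perm B`. -/
theorem tropPerm_tropMul_ge {n : ℕ} [NeZero n] (A B : Fin n → Fin n → ℝ) :
    tropPerm (tropMul A B) ≥ tropPerm A + tropPerm B := by
  obtain ⟨σ, -, hσ⟩ := Finset.exists_mem_eq_sup' 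
    ⟨Equiv.refl (Fin n), Finset.mem_univ _⟩ (fun σ : Equiv.Perm (Fin n) => ∑ i, A i (σ i))
  obtain ⟨τ, -, hτ⟩ := Finset.exists_mem_eq_sup' 
    ⟨Equiv.refl (Fin n), Finset.mem_univ _⟩ (fun σ : Equiv.Perm (Fin n) => ∑ i, B i (σ i))
  unfold tropPerm
  rw [hσ, hτ]
  calc ∑ i, A i (σ i) + ∑ i, B i (τ i)
      = ∑ i, (A i (σ i) + B (σ i) (τ (σ i))) := by
        rw [Finset.sum_add_distrib]
        congr 1
        exact (Equiv.sum_comp σ (fun j => B j (τ j))).symm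
    _ ≤ ∑ i, tropMul A B i ((σ.trans τ) i) := by
        apply Finset.sum_le_sum
        intro i _
        exact Finset.le_sup' (f := fun k => A i k + B k (τ (σ i))) (Finset.mem_univ (σ i))
    _ ≤ Finset.univ.sup' ⟨Equiv.refl (Fin n), Finset.mem_univ _⟩
        (fun π : Equiv.Perm (Fin n) => ∑ i, tropMul A B i (π i)) :=
        Finset.le_sup' (fun π : Equiv.Perm (Fin n) => ∑ i, tropMul A B i (π i)) (Finset.mem_univ (σ.trans τ))
end

section
/- Let R be a commutative semiring in which addition is selective (for all a, b in R, a + b = a or a + b = b). Then for all x, y ∈ R and every natural number n, (x + y)^n = x^n + y^n. -/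
private lemma absorb_pow {R : Type*} [CommSemiring R]
    (hsel : ∀ a b : R, a + b = a ∨ a + b = b) (x y : R) (h : x + y = x) :
    ∀ n : ℕ, x ^ n + y ^ n = x ^ n := by
  intro n
  induction n with
  | zero => simpa using (hsel 1 1).elim id id
  | succ n ih =>
    have key : x ^ (n+1) = x ^ (n+1) + x * y ^ n + y * x ^ n + y ^ (n+1) := by
      calc x ^ (n+1) = (x + y) * (x ^ n + y ^ n) := by rw [h, ih]; ring
        _ = x ^ (n+1) + x * y ^ n + y * x ^ n + y ^ (n+1) := by ring
    calc x ^ (n+1) + y ^ (n+1)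
        = (x ^ (n+1) + x * y ^ n + y * x ^ n + y ^ (n+1)) + y ^ (n+1) := by
          rw [← key]
      _ = x ^ (n+1) + x * y ^ n + y * x ^ n + (y ^ (n+1) + y ^ (n+1)) := by ring
      _ = x ^ (n+1) + x * y ^ n + y * x ^ n + y ^ (n+1) := by
          rw [(hsel (y ^ (n+1)) (y ^ (n+1))).elim id id]
      _ = x ^ (n+1) := key.symm

/-- Frobenius property (Remark 1.4(b)): in a commutative semiring with selective
addition, `(x + y) ^ n = x ^ n + y ^ n`. -/
theorem add_pow_eq_pow_add_pow_of_selective {R : Type*} [CommSemiring R]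
    (hsel : ∀ a b : R, a + b = a ∨ a + b = b) (x y : R) (n : ℕ) :
    (x + y) ^ n = x ^ n + y ^ n := by
  rcases hsel x y with h | h
  · rw [h, absorb_pow hsel x y h n]
  · rw [h, add_comm]
    exact (absorb_pow hsel y x (by rw [add_comm]; exact h) n).symm
end

section
/- Let n ≥ 1 and let a : {0, 1, …, n} → ℝ be the coefficients of the tropical polynomial f(x) = max_{0 ≤ i ≤ n} (a_i + i·x). Call x₀ ∈ ℝ a corner root of f if there exist distinct indices i ≠ j with a_i + i·x₀ = a_j + j·x₀ = f(x₀). If x₀ is a corner root of f and every corner root of f equals x₀, then n·x₀ = a_0 − a_n. -/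
/-- The tropical polynomial `f(x) = max_{0 ≤ i ≤ n} (a_i + i·x)` determined by
coefficients `a : Fin (n+1) → ℝ`. -/
noncomputable def tropEval {n : ℕ} (a : Fin (n + 1) → ℝ) (x : ℝ) : ℝ :=
  Finset.univ.sup' Finset.univ_nonempty fun i : Fin (n + 1) => a i + (i : ℕ) * x

/-- `x` is a corner root of the tropical polynomial with coefficients `a` if two
distinct monomials simultaneously attain the maximum at `x`. -/
def IsCornerRoot {n : ℕ} (a : Fin (n + 1) → ℝ) (x : ℝ) : Prop :=
  ∃ i j : Fin (n + 1), i ≠ j ∧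
    a i + (i : ℕ) * x = tropEval a x ∧ a j + (j : ℕ) * x = tropEval a x

lemma le_tropEval {n : ℕ} (a : Fin (n + 1) → ℝ) (x : ℝ) (i : Fin (n + 1)) :
    a i + (i : ℕ) * x ≤ tropEval a x := by
  unfold tropEval
  exact Finset.le_sup' (fun i : Fin (n+1) => a i + (i : ℕ) * x) (Finset.mem_univ i)

lemma exists_eq_tropEval {n : ℕ} (a : Fin (n + 1) → ℝ) (x : ℝ) :
    ∃ i, tropEval a x = a i + (i : ℕ) * x := by
  obtain ⟨i, -, h⟩ := Finset.exists_mem_eq_sup' (Finset.univ_nonempty)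
    (fun i : Fin (n + 1) => a i + (i : ℕ) * x)
  exact ⟨i, h⟩

lemma tropEval_le {n : ℕ} (a : Fin (n + 1) → ℝ) (x c : ℝ)
    (h : ∀ i, a i + (i : ℕ) * x ≤ c) : tropEval a x ≤ c := by
  unfold tropEval
  exact Finset.sup'_le _ _ fun i _ => h i

lemma top_attains {n : ℕ} (hn : 1 ≤ n) (a : Fin (n + 1) → ℝ) (x₀ : ℝ)
    (huniq : ∀ y : ℝ, IsCornerRoot a y → y = x₀) :
    a (Fin.last n) + (n : ℝ) * x₀ = tropEval a x₀ := by
  have hnR : (0 : ℝ) < n := by exact_mod_cast hn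
  have hlastval : ((Fin.last n : Fin (n+1)) : ℕ) = n := Fin.val_last n
  have hLlast : ∀ x : ℝ, a (Fin.last n) + (n : ℝ) * x ≤ tropEval a x := by
    intro x
    have := le_tropEval a x (Fin.last n)
    rwa [hlastval] at this
  set S : Set ℝ := {x : ℝ | a (Fin.last n) + (n : ℝ) * x < tropEval a x} with hSdef
  by_cases hS : S.Nonempty
  · -- S nonempty: its sup is a corner root where the top monomial attains the max
    -- boundedness above
    have hbdd : BddAbove S := by
      refine ⟨max 0 (Finset.univ.sup' Finset.univ_nonempty
        fun j : Fin (n+1) => a j - a (Fin.last n)), ?_⟩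
      intro x hx
      by_contra hxle
      push_neg at hxle
      have hx0 : (0:ℝ) ≤ x := le_of_lt (lt_of_le_of_lt (le_max_left _ _) hxle)
      have hxj : ∀ j : Fin (n+1), a j - a (Fin.last n) ≤ x := by
        intro j
        have h1 : a j - a (Fin.last n) ≤ Finset.univ.sup' Finset.univ_nonempty
            (fun j : Fin (n+1) => a j - a (Fin.last n)) :=
          Finset.le_sup' (fun j : Fin (n+1) => a j - a (Fin.last n)) (Finset.mem_univ j)
        have h2 := lt_of_le_of_lt (le_max_right _ _) hxle
        linarith
      have : tropEval a x ≤ a (Fin.last n) + (n : ℝ) * x := by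
        apply tropEval_le
        intro i
        rcases eq_or_ne i (Fin.last n) with rfl | hi
        · rw [hlastval]
        · have hilt : (i : ℕ) < n := by
            have := Fin.val_lt_last hi
            simpa using this
          have hile : ((i : ℕ) : ℝ) ≤ (n : ℝ) - 1 := by
            have h1 : ((i : ℕ) : ℝ) + 1 ≤ (n : ℝ) := by exact_mod_cast hilt
            linarith
          have hj := hxj i
          nlinarith [mul_le_mul_of_nonneg_right hile hx0]
      have hxS : x ∈ S := hx
      rw [hSdef] at hxS
      exact absurd this (not_le.mpr hxS)
    set y := sSup S with hy
    have hmem_le : ∀ s ∈ S, s ≤ y := fun s hs => le_csSup hbdd hs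
    -- Step A: top monomial attains max at y
    have hAy : a (Fin.last n) + (n : ℝ) * y = tropEval a y := by
      by_contra hne
      have hlt : a (Fin.last n) + (n : ℝ) * y < tropEval a y :=
        lt_of_le_of_ne (hLlast y) hne
      obtain ⟨j, hj⟩ := exists_eq_tropEval a y
      have hjne : j ≠ Fin.last n := by
        intro h; rw [h, hlastval] at hj; linarith
      set gap := tropEval a y - (a (Fin.last n) + (n : ℝ) * y) with hgap
      have hgap0 : 0 < gap := by rw [hgap]; linarith
      set δ := gap / (2 * n) with hδdef
      have hδ0 : 0 < δ := by positivity
      have hx : (y + δ) ∈ S := by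
        rw [hSdef]
        have h1 : a j + (j : ℕ) * (y + δ) ≤ tropEval a (y + δ) := le_tropEval a _ j
        have hjle : ((j : ℕ) : ℝ) ≤ (n : ℝ) := by
          exact_mod_cast Nat.cast_le.mpr (Nat.le_of_lt_succ j.isLt)
        have hj0 : (0:ℝ) ≤ ((j : ℕ) : ℝ) := by positivity
        have hnδ : (n : ℝ) * δ = gap / 2 := by
          rw [hδdef]; field_simp
        show a (Fin.last n) + (n : ℝ) * (y + δ) < tropEval a (y + δ)
        nlinarith [mul_le_mul_of_nonneg_right hjle (le_of_lt hδ0),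
          mul_nonneg hj0 (le_of_lt hδ0)]
      have := hmem_le _ hx
      linarith
    -- Step B: some other monomial also attains max at y
    have hB : ∃ j : Fin (n+1), j ≠ Fin.last n ∧ a j + (j : ℕ) * y = tropEval a y := by
      by_contra hno
      push_neg at hno
      have hstrict : ∀ j : Fin (n+1), j ≠ Fin.last n →
          a j + (j : ℕ) * y < a (Fin.last n) + (n : ℝ) * y := by
        intro j hj
        have h1 := le_tropEval a y j
        have h2 := hno j hj
        rw [← hAy] at h1 h2
        exact lt_of_le_of_ne h1 h2
      set T := Finset.univ.erase (Fin.last n) with hT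
      have hT0 : (0 : Fin (n+1)) ∈ T := by
        rw [hT]
        refine Finset.mem_erase.mpr ⟨?_, Finset.mem_univ _⟩
        intro h
        have := congrArg Fin.val h
        simp [Fin.val_last] at this
        omega
      have hTne : T.Nonempty := ⟨0, hT0⟩
      set ε := T.inf' hTne (fun j => (a (Fin.last n) + (n : ℝ) * y) - (a j + (j : ℕ) * y))
        with hεdef
      have hε0 : 0 < ε := by
        rw [hεdef]
        rw [Finset.lt_inf'_iff]
        intro j hj
        have hjne : j ≠ Fin.last n := (Finset.mem_erase.mp hj).1
        have := hstrict j hjne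
        linarith
      set δ := ε / (4 * n) with hδdef
      have hδ0 : 0 < δ := by positivity
      have hnδ : (n : ℝ) * δ ≤ ε := by
        rw [hδdef]
        rw [div_eq_iff (by positivity : (4:ℝ) * n ≠ 0)] at *
        nlinarith
      -- near y (from the left), the top monomial dominates, so no points of S there
      have hloc : ∀ x : ℝ, y - δ < x → x ≤ y → x ∉ S := by
        intro x hx1 hx2 hxS
        rw [hSdef] at hxS
        have : tropEval a x ≤ a (Fin.last n) + (n : ℝ) * x := by
          apply tropEval_le
          intro i
          rcases eq_or_ne i (Fin.last n) with rfl | hi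
          · rw [hlastval]
          · have hiT : i ∈ T := Finset.mem_erase.mpr ⟨hi, Finset.mem_univ _⟩
            have hεle : ε ≤ (a (Fin.last n) + (n : ℝ) * y) - (a i + (i : ℕ) * y) := by
              rw [hεdef]
              exact Finset.inf'_le (fun j : Fin (n+1) =>
                (a (Fin.last n) + (n : ℝ) * y) - (a j + (j : ℕ) * y)) hiT
            have hile : ((i : ℕ) : ℝ) ≤ (n : ℝ) := by
              exact_mod_cast Nat.cast_le.mpr (Nat.le_of_lt_succ i.isLt)
            have hi0 : (0:ℝ) ≤ ((i : ℕ) : ℝ) := by positivity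
            have hyx0 : 0 ≤ y - x := by linarith
            have hyxδ : y - x ≤ δ := by linarith
            nlinarith [mul_le_mul_of_nonneg_right hile hyx0,
              mul_le_mul_of_nonneg_left hyxδ (le_of_lt hnR)]
        exact absurd this (not_le.mpr hxS)
      obtain ⟨s, hsS, hs⟩ := exists_lt_of_lt_csSup hS (show y - δ < y by linarith)
      exact hloc s hs (hmem_le s hsS) hsS
    -- y is a corner root, hence y = x₀
    obtain ⟨j, hjne, hjy⟩ := hB
    have hcorner : IsCornerRoot a y := by
      refine ⟨Fin.last n, j, Ne.symm hjne, ?_, hjy⟩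
      rw [hlastval]
      exact_mod_cast hAy
    have hyx₀ : y = x₀ := huniq y hcorner
    rw [← hyx₀]
    exact hAy
  · -- S empty: top monomial attains max everywhere
    rw [Set.not_nonempty_iff_eq_empty] at hS
    have : x₀ ∉ S := by rw [hS]; exact Set.notMem_empty _
    rw [hSdef] at this
    simp only [Set.mem_setOf_eq, not_lt] at this
    exact le_antisymm (hLlast x₀) this

lemma rev_cast_eq {n : ℕ} (i : Fin (n+1)) :
    (((Fin.rev i : Fin (n+1)) : ℕ) : ℝ) = (n : ℝ) - ((i : ℕ) : ℝ) := by
  have h : (Fin.rev i : ℕ) + (i : ℕ) = n := by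
    have := Fin.val_rev i
    have hi := Nat.le_of_lt_succ i.isLt
    omega
  have : ((Fin.rev i : ℕ) : ℝ) + ((i : ℕ) : ℝ) = (n : ℝ) := by exact_mod_cast h
  linarith

lemma tropEval_rev {n : ℕ} (a : Fin (n + 1) → ℝ) (x : ℝ) :
    tropEval (fun i => a (Fin.rev i)) x = tropEval a (-x) + (n : ℝ) * x := by
  apply le_antisymm
  · apply tropEval_le
    intro i
    have h := le_tropEval a (-x) (Fin.rev i)
    have hc := rev_cast_eq (Fin.rev i)
    rw [Fin.rev_rev] at hc
    rw [hc, sub_mul]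
    rw [mul_neg] at h
    linarith
  · obtain ⟨k, hk⟩ := exists_eq_tropEval a (-x)
    have h := le_tropEval (fun i => a (Fin.rev i)) x (Fin.rev k)
    simp only [Fin.rev_rev] at h
    have hc := rev_cast_eq k
    rw [hc, sub_mul] at h
    rw [mul_neg] at hk
    linarith

lemma cornerRoot_rev {n : ℕ} (a : Fin (n + 1) → ℝ) (x : ℝ)
    (h : IsCornerRoot a x) : IsCornerRoot (fun i => a (Fin.rev i)) (-x) := by
  obtain ⟨i, j, hij, hi, hj⟩ := h
  refine ⟨Fin.rev i, Fin.rev j, fun h => hij (Fin.rev_injective h), ?_, ?_⟩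
  · simp only [Fin.rev_rev]
    rw [tropEval_rev, neg_neg, rev_cast_eq i]
    linarith
  · simp only [Fin.rev_rev]
    rw [tropEval_rev, neg_neg, rev_cast_eq j]
    linarith

/-- Claim 2.6: if `x₀` is the unique corner root of the tropical polynomial
`f(x) = max_{0 ≤ i ≤ n} (a_i + i·x)` (an `x₀`-primary polynomial), then
`n·x₀ = a_0 − a_n`. -/
theorem primary_corner_root_eq {n : ℕ} (hn : 1 ≤ n) (a : Fin (n + 1) → ℝ) (x₀ : ℝ)
    (h₀ : IsCornerRoot a x₀) (huniq : ∀ y : ℝ, IsCornerRoot a y → y = x₀) :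
    (n : ℝ) * x₀ = a 0 - a (Fin.last n) := by
  have h1 := top_attains hn a x₀ huniq
  set b : Fin (n+1) → ℝ := fun i => a (Fin.rev i) with hb
  have huniq' : ∀ y : ℝ, IsCornerRoot b y → y = -x₀ := by
    intro y hy
    have h2 := cornerRoot_rev b y hy
    have hba : (fun i => b (Fin.rev i)) = a := by
      funext i; simp [hb, Fin.rev_rev]
    rw [hba] at h2
    have := huniq (-y) h2
    linarith
  have h2 := top_attains hn b (-x₀) huniq'
  have hblast : b (Fin.last n) = a 0 := by
    simp [hb, Fin.rev_last]
  have h3 : tropEval b (-x₀) = tropEval a x₀ + (n : ℝ) * (-x₀) := by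
    rw [hb, tropEval_rev, neg_neg]
  rw [hblast, h3] at h2
  linarith
end

section
/- Let R be a commutative semiring, A an n×n matrix over R, m ≥ 1, S a subset of the index set, and π a permutation of the index set with π(S) = S. Then there exists c ∈ R such that perm((A^m)|_S) = (∏_{i ∈ S} A_{i,π(i)})^m + c, where (A^m)|_S is the principal submatrix of the ordinary m-th matrix power A^m with rows and columns indexed by S. -/
/-!
Along a permutation `π` with `π(S) = S`, each `i ∈ S` determines the walk
`i, π i, …, π^m i`, whose weight `∏_{j<m} A_{π^j i, π^{j+1} i}` is a summand of `(A^m)_{i, π^m i}`.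
Since `π` permutes `S`, the product of these walk weights over `i ∈ S` is
`(∏_{i∈S} A_{i,π i})^m`, and `∏_{i∈S} (A^m)_{i, π^m i}` is the term of the permanent of
`(A^m)|_S` indexed by `π^m`.
-/

open Finset

/-- In a canonically ordered semiring this is `a ≤ b`. -/
def IsSummand {R : Type*} [Add R] (a b : R) : Prop :=
  ∃ c, b = a + c

namespace IsSummand

variable {R : Type*}

theorem refl [AddZeroClass R] (a : R) : IsSummand a a :=
  ⟨0, (add_zero a).symm⟩

theorem trans [AddSemigroup R] {a b c : R} (hab : IsSummand a b) (hbc : IsSummand b c) :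
    IsSummand a c := by
  obtain ⟨d, rfl⟩ := hab
  obtain ⟨e, rfl⟩ := hbc
  exact ⟨d + e, add_assoc a d e⟩

theorem mul [Semiring R] {a b a' b' : R} (h : IsSummand a b) (h' : IsSummand a' b') :
    IsSummand (a * a') (b * b') := by
  obtain ⟨c, rfl⟩ := h
  obtain ⟨c', rfl⟩ := h'
  exact ⟨a * c' + c * (a' + c'), by noncomm_ring⟩

theorem finset_prod [CommSemiring R] {ι : Type*} {s : Finset ι} {f g : ι → R}
    (h : ∀ i ∈ s, IsSummand (f i) (g i)) : IsSummand (∏ i ∈ s, f i) (∏ i ∈ s, g i) := by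
  classical
  induction s using Finset.induction_on with
  | empty => exact refl 1
  | insert a s ha ih =>
    simp only [prod_insert ha]
    exact (h a (mem_insert_self a s)).mul (ih fun i hi => h i (mem_insert_of_mem hi))

theorem single_finset_sum [AddCommMonoid R] {ι : Type*} [DecidableEq ι] {s : Finset ι}
    (f : ι → R) {i : ι} (hi : i ∈ s) : IsSummand (f i) (∑ j ∈ s, f j) :=
  ⟨∑ j ∈ s.erase i, f j, (add_sum_erase s f hi).symm⟩

end IsSummand

section Matrix

variable {n R : Type*} [Fintype n] [DecidableEq n] [CommSemiring R]

theorem Matrix.isSummand_prod_apply_permanent (M : Matrix n n R) (σ : Equiv.Perm n) :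
    IsSummand (∏ i, M i (σ i)) M.permanent := by
  rw [← Matrix.permanent_transpose]
  exact IsSummand.single_finset_sum (fun τ : Equiv.Perm n => ∏ i, M.transpose (τ i) i) (mem_univ σ)

theorem Matrix.isSummand_prod_range_pow_apply (A : Matrix n n R) (p : ℕ → n) (m : ℕ) :
    IsSummand (∏ j ∈ range m, A (p j) (p (j + 1))) ((A ^ m) (p 0) (p m)) := by
  induction m with
  | zero => simpa using IsSummand.refl ((1 : Matrix n n R) (p 0) (p 0))
  | succ m ih =>
    rw [prod_range_succ, pow_succ, Matrix.mul_apply]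
    exact (ih.mul (IsSummand.refl _)).trans <|
      IsSummand.single_finset_sum (fun k => (A ^ m) (p 0) k * A k (p (m + 1))) (mem_univ (p m))

end Matrix

theorem Equiv.Perm.prod_prod_range_apply_pow {ι M : Type*} [Fintype ι] [CommMonoid M]
    (σ : Equiv.Perm ι) (f : ι → ι → M) (m : ℕ) :
    ∏ i, ∏ j ∈ range m, f ((σ ^ j) i) ((σ ^ (j + 1)) i) = (∏ i, f i (σ i)) ^ m := by
  have hstep : ∀ j, ∏ i, f ((σ ^ j) i) ((σ ^ (j + 1)) i) = ∏ i, f i (σ i) := fun j => by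
    simp only [pow_succ', Equiv.Perm.mul_apply]
    exact Equiv.prod_comp (σ ^ j) fun i => f i (σ i)
  rw [prod_comm, prod_congr rfl fun j _ => hstep j, prod_const, card_range]

theorem permanent_pow_submatrix_eq_track_pow_add_general {R : Type*} [CommSemiring R]
    {n : ℕ} (A : Matrix (Fin n) (Fin n) R) (m : ℕ)
    (S : Finset (Fin n)) (π : Equiv.Perm (Fin n)) (hπ : S.image π = S) :
    ∃ c : R,
      ((A ^ m).submatrix (fun x : {a // a ∈ S} => (x : Fin n))
        (fun x : {a // a ∈ S} => (x : Fin n))).permanent =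
      (∏ i ∈ S, A i (π i)) ^ m + c := by
  have hS : ∀ x, π x ∈ S ↔ x ∈ S := fun x => by
    conv_lhs => rw [← hπ]
    exact π.injective.mem_finset_image
  set τ := π.subtypePerm hS
  have hwalks : (∏ i ∈ S, A i (π i)) ^ m =
      ∏ i : S, ∏ j ∈ range m, A ((τ ^ j) i) ((τ ^ (j + 1)) i) := by
    rw [τ.prod_prod_range_apply_pow fun i k : S => A i k, ← prod_coe_sort S]
    rfl
  rw [hwalks]
  refine IsSummand.trans (IsSummand.finset_prod fun i _ => ?_)
    (Matrix.isSummand_prod_apply_permanent _ (τ ^ m))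
  exact A.isSummand_prod_range_pow_apply (fun j => ((τ ^ j) i : Fin n)) m

/-- Existence content of Claim 3.5: for every permutation-track monomial
`∏_{i ∈ S} A_{i, π(i)}` of a principal minor of `A` (where `π(S) = S`), its
`m`-th power appears as a summand of the permanent of the corresponding
principal minor of `A^m`. -/
theorem permanent_pow_submatrix_eq_track_pow_add {R : Type*} [CommSemiring R]
    {n : ℕ} (A : Matrix (Fin n) (Fin n) R) (m : ℕ) (hm : 1 ≤ m)
    (S : Finset (Fin n)) (π : Equiv.Perm (Fin n)) (hπ : S.image π = S) :
    ∃ c : R,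
      ((A ^ m).submatrix (fun x : {a // a ∈ S} => (x : Fin n))
        (fun x : {a // a ∈ S} => (x : Fin n))).permanent =
      (∏ i ∈ S, A i (π i)) ^ m + c :=
  permanent_pow_submatrix_eq_track_pow_add_general A m S π hπ
end

section
/- Let A be an n×n real matrix, m ≥ 1, S a subset of the index set, and π a permutation of the index set with π(S) = S. Then ∑_{i ∈ S} (A^{⊙m})_{i, π^m(i)} ≥ m · ∑_{i ∈ S} A_{i, π(i)}, where A^{⊙m} is the m-th tropical matrix power and π^m is the m-th iterate of π. -/
/-- The `m`-th tropical power `A^{⊙m}` of an `n × n` real matrix (meaningful for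
`m ≥ 1`; the value at `m = 0` is a junk value). -/
noncomputable def tropPow {n : ℕ} [NeZero n] (A : Fin n → Fin n → ℝ) :
    ℕ → Fin n → Fin n → ℝ
  | 0 => fun _ _ => 0
  | 1 => A
  | m + 2 => tropMul A (tropPow A (m + 1))

lemma tropPow_succ_ge {n : ℕ} [NeZero n] (A : Fin n → Fin n → ℝ) (m : ℕ)
    (i j k : Fin n) : A i k + tropPow A (m + 1) k j ≤ tropPow A (m + 2) i j := by
  show _ ≤ tropMul A (tropPow A (m+1)) i j
  exact Finset.le_sup' (fun k => A i k + tropPow A (m+1) k j) (Finset.mem_univ k)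

/-- Max-plus form of Claim 3.5: for a permutation `π` with `π(S) = S`, the track
of `π^m` in `A^{⊙m}` dominates `m` times the track of `π` in `A`. -/
theorem tropPow_track_ge {n : ℕ} [NeZero n] (A : Fin n → Fin n → ℝ)
    (m : ℕ) (hm : 1 ≤ m) (S : Finset (Fin n)) (π : Equiv.Perm (Fin n))
    (hπ : S.image π = S) :
    ∑ i ∈ S, tropPow A m i ((π ^ m) i) ≥ (m : ℝ) * ∑ i ∈ S, A i (π i) := by
  induction m with
  | zero => omega
  | succ m ih =>
    rcases Nat.eq_or_lt_of_le hm with h | h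
    · simp [← h, tropPow]
    · have hm1 : 1 ≤ m := by omega
      have ih' := ih hm1
      obtain ⟨m, rfl⟩ : ∃ k, m = k + 1 := ⟨m - 1, by omega⟩
      have key : ∀ i, A i (π i) + tropPow A (m+1) (π i) ((π ^ (m+1)) (π i)) ≤
          tropPow A (m+2) i ((π ^ (m+2)) i) := by
        intro i
        have : (π ^ (m+2)) i = (π ^ (m+1)) (π i) := by
          rw [pow_succ]; rfl
        rw [this]
        exact tropPow_succ_ge A m i ((π ^ (m+1)) (π i)) (π i)
      rw [ge_iff_le]
      push_cast
      calc ((m:ℝ)+1+1) * ∑ i ∈ S, A i (π i)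
          = ∑ i ∈ S, A i (π i) + ((m:ℝ)+1) * ∑ i ∈ S, A i (π i) := by ring
        _ ≤ ∑ i ∈ S, A i (π i) + ∑ i ∈ S, tropPow A (m+1) i ((π ^ (m+1)) i) := by
            have := ih'
            push_cast at this ⊢
            linarith
        _ = ∑ i ∈ S, (A i (π i) + tropPow A (m+1) (π i) ((π ^ (m+1)) (π i))) := by
            rw [Finset.sum_add_distrib]
            congr 1
            conv_lhs => rw [← hπ, Finset.sum_image (fun a _ b _ h => π.injective h)]
        _ ≤ ∑ i ∈ S, tropPow A (m+2) i ((π ^ (m+2)) i) :=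
            Finset.sum_le_sum fun i _ => key i
end

section
/- Let A be an n×n real matrix, m ≥ 1, and S a nonempty subset of the index set. Then perm((A^{⊙m})|_S) ≥ m · perm(A|_S), where M|_S is the principal submatrix of M with rows and columns indexed by S, and perm is the tropical permanent (maximum over permutations of S of the sum of the corresponding entries). -/
/-- The tropical permanent of the principal submatrix of `M` on the index set
`S`: the maximum over permutations `σ` of `S` of `∑_{i ∈ S} M i (σ i)`. -/
noncomputable def tropPermOn {n : ℕ} (M : Fin n → Fin n → ℝ) (S : Finset (Fin n)) : ℝ :=
  Finset.univ.sup' ⟨Equiv.refl {x // x ∈ S}, Finset.mem_univ _⟩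
    fun σ : Equiv.Perm {x // x ∈ S} => ∑ i : {x // x ∈ S}, M (i : Fin n) ((σ i : Fin n))

open Finset

section TropicalPower

variable {n : ℕ} [NeZero n]

lemma add_le_tropMul (A B : Fin n → Fin n → ℝ) (i k j : Fin n) :
    A i k + B k j ≤ tropMul A B i j :=
  le_sup' (fun k => A i k + B k j) (mem_univ k)

lemma tropPow_succ (A : Fin n → Fin n → ℝ) {m : ℕ} (hm : 1 ≤ m) :
    tropPow A (m + 1) = tropMul A (tropPow A m) := by
  obtain ⟨k, rfl⟩ := Nat.exists_eq_add_of_le' hm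
  rfl

lemma sum_walk_le_tropPow (A : Fin n → Fin n → ℝ) {m : ℕ} (hm : 1 ≤ m) (p : ℕ → Fin n) :
    ∑ k ∈ range m, A (p k) (p (k + 1)) ≤ tropPow A m (p 0) (p m) := by
  induction m, hm using Nat.le_induction generalizing p with
  | base => simp [tropPow]
  | succ m hm ih =>
    calc ∑ k ∈ range (m + 1), A (p k) (p (k + 1))
        = A (p 0) (p 1) + ∑ k ∈ range m, A (p (k + 1)) (p (k + 1 + 1)) := by
          rw [sum_range_succ', add_comm]
      _ ≤ A (p 0) (p 1) + tropPow A m (p 1) (p (m + 1)) :=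
          add_le_add_right (ih (fun k => p (k + 1))) _
      _ ≤ tropPow A (m + 1) (p 0) (p (m + 1)) := by
          rw [tropPow_succ A hm]
          exact add_le_tropMul _ _ _ _ _

end TropicalPower

section TropicalPermanent

variable {n : ℕ} (M : Fin n → Fin n → ℝ) (S : Finset (Fin n))

lemma sum_perm_le_tropPermOn (σ : Equiv.Perm S) :
    ∑ i : S, M i (σ i) ≤ tropPermOn M S :=
  le_sup' (fun τ : Equiv.Perm S => ∑ i : S, M i (τ i)) (mem_univ σ)

lemma exists_tropPermOn_eq_sum_perm :
    ∃ σ : Equiv.Perm S, tropPermOn M S = ∑ i : S, M i (σ i) := by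
  obtain ⟨σ, -, hσ⟩ := exists_mem_eq_sup' univ_nonempty
    (fun τ : Equiv.Perm S => ∑ i : S, M i (τ i))
  exact ⟨σ, hσ⟩

lemma sum_orbit_walks_eq (σ : Equiv.Perm S) (m : ℕ) :
    ∑ i : S, ∑ k ∈ range m, M ((σ ^ k) i) ((σ ^ (k + 1)) i) = m * ∑ i : S, M i (σ i) := by
  have hshift : ∀ k, ∑ i : S, M ((σ ^ k) i) ((σ ^ (k + 1)) i) = ∑ i : S, M i (σ i) := by
    intro k
    simp only [pow_succ', Equiv.Perm.mul_apply]
    exact Equiv.sum_comp (σ ^ k) fun j : S => M j (σ j)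
  rw [sum_comm, sum_congr rfl fun k _ => hshift k, sum_const, card_range, nsmul_eq_mul]

end TropicalPermanent

theorem tropPermOn_tropPow_ge_general {n : ℕ} [NeZero n] (A : Fin n → Fin n → ℝ)
    (m : ℕ) (hm : 1 ≤ m) (S : Finset (Fin n)) :
    tropPermOn (tropPow A m) S ≥ (m : ℝ) * tropPermOn A S := by
  obtain ⟨σ, hσ⟩ := exists_tropPermOn_eq_sum_perm A S
  calc (m : ℝ) * tropPermOn A S
      = ∑ i : S, ∑ k ∈ range m, A ((σ ^ k) i) ((σ ^ (k + 1)) i) := by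
        rw [hσ, sum_orbit_walks_eq]
    _ ≤ ∑ i : S, tropPow A m i ((σ ^ m) i) :=
        sum_le_sum fun i _ => by
          simpa using sum_walk_le_tropPow A hm fun k => ((σ ^ k) i : Fin n)
    _ ≤ tropPermOn (tropPow A m) S := sum_perm_le_tropPermOn _ S (σ ^ m)

/-- The per-minor inequality which is the key step of Theorem 3.6: for any
nonempty index set `S`, `perm((A^{⊙m})|_S) ≥ m · perm(A|_S)`. -/
theorem tropPermOn_tropPow_ge {n : ℕ} [NeZero n] (A : Fin n → Fin n → ℝ)
    (m : ℕ) (hm : 1 ≤ m) (S : Finset (Fin n)) (hS : S.Nonempty) :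
    tropPermOn (tropPow A m) S ≥ (m : ℝ) * tropPermOn A S :=
  tropPermOn_tropPow_ge_general A m hm S
end

section
/- Let A be an n×n real matrix (n ≥ 1) and m ≥ 1. Then perm(A^{⊙m}) ≥ m · perm(A), where A^{⊙m} is the m-th tropical matrix power and perm is the tropical permanent. -/
lemma path_le_tropPow {n : ℕ} [NeZero n] (A : Fin n → Fin n → ℝ)
    (σ : Equiv.Perm (Fin n)) :
    ∀ m, 1 ≤ m → ∀ i : Fin n,
      ∑ k ∈ Finset.range m, A ((σ ^ k) i) ((σ ^ (k + 1)) i)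
        ≤ tropPow A m i ((σ ^ m) i) := by
  intro m
  induction m with
  | zero => omega
  | succ m ih =>
    intro _ i
    rcases Nat.eq_zero_or_pos m with rfl | hm
    · simp [tropPow]
    · obtain ⟨m, rfl⟩ : ∃ m', m = m' + 1 := ⟨m - 1, by omega⟩
      show _ ≤ tropMul A (tropPow A (m + 1)) i _
      have key : ∑ k ∈ Finset.range (m + 2), A ((σ ^ k) i) ((σ ^ (k + 1)) i)
          = A i (σ i) + ∑ k ∈ Finset.range (m + 1),
              A ((σ ^ k) (σ i)) ((σ ^ (k + 1)) (σ i)) := by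
        rw [Finset.sum_range_succ' (fun k => A ((σ ^ k) i) ((σ ^ (k + 1)) i)) (m + 1)]
        rw [add_comm]
        simp [pow_succ, Equiv.Perm.mul_apply]
      rw [key]
      have h1 : A i (σ i) + ∑ k ∈ Finset.range (m + 1),
          A ((σ ^ k) (σ i)) ((σ ^ (k + 1)) (σ i))
          ≤ A i (σ i) + tropPow A (m + 1) (σ i) ((σ ^ (m + 1)) (σ i)) := by
        have := ih (by omega) (σ i)
        linarith
      refine h1.trans ?_
      have h2 : (σ ^ (m + 1)) (σ i) = (σ ^ (m + 2)) i := by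
        rw [pow_succ]; rfl
      rw [h2]
      exact Finset.le_sup' (fun k => A i k + tropPow A (m + 1) k ((σ ^ (m + 2)) i))
        (Finset.mem_univ (σ i))

/-- Constant-coefficient case of Theorem 3.6 (Example 3.8(1)): the tropical
permanent of `A^{⊙m}` dominates `m` times the tropical permanent of `A`. -/
theorem tropPerm_tropPow_ge {n : ℕ} [NeZero n] (A : Fin n → Fin n → ℝ)
    (m : ℕ) (hm : 1 ≤ m) :
    tropPerm (tropPow A m) ≥ (m : ℝ) * tropPerm A := by
  obtain ⟨σ, -, hσ⟩ := Finset.exists_mem_eq_sup'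
    (⟨Equiv.refl (Fin n), Finset.mem_univ _⟩ :
      (Finset.univ : Finset (Equiv.Perm (Fin n))).Nonempty)
    (fun σ : Equiv.Perm (Fin n) => ∑ i, A i (σ i))
  have step1 : (m : ℝ) * tropPerm A
      = ∑ i, ∑ k ∈ Finset.range m, A ((σ ^ k) i) ((σ ^ (k + 1)) i) := by
    rw [Finset.sum_comm]
    have : ∀ k, ∑ i, A ((σ ^ k) i) ((σ ^ (k + 1)) i) = ∑ i, A i (σ i) := by
      intro k
      have : ∀ i : Fin n, (σ ^ (k + 1)) i = σ ((σ ^ k) i) := by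
        intro i; rw [pow_succ']; rfl
      simp_rw [this]
      exact Equiv.sum_comp (σ ^ k) (fun j => A j (σ j))
    simp_rw [this]
    rw [Finset.sum_const, Finset.card_range, nsmul_eq_mul, tropPerm, hσ]
  rw [ge_iff_le, step1]
  have step2 : ∑ i, ∑ k ∈ Finset.range m, A ((σ ^ k) i) ((σ ^ (k + 1)) i)
      ≤ ∑ i, tropPow A m i ((σ ^ m) i) :=
    Finset.sum_le_sum fun i _ => path_le_tropPow A σ m hm i
  refine step2.trans ?_
  exact Finset.le_sup' (fun τ : Equiv.Perm (Fin n) => ∑ i, tropPow A m i (τ i))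
    (Finset.mem_univ (σ ^ m))
end
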